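/- arXiv:1607.06911 — 6 statements merged into one kernel-verified Lean document; each statement's English description precedes it below -/
import Mathlib

section
/- Let G be a graph on n vertices with no isolated vertices, let k ≤ n, and let φ assign color k+1 to every vertex of G. Then there exists a proper (k+1)-coloring φ' of G with dist(φ,φ') ≤ k if and only if G has a vertex cover of size at most k. -/
/-- A (possibly improper) `r`-coloring is proper if adjacent vertices get different colors. -/
def IsProperColoring {V : Type*} (G : SimpleGraph V) {r : ℕ} (φ : V → Fin r) : Prop :=
  ∀ ⦃u v : V⦄, G.Adj u v → φ u ≠ φ v

/-- The Hamming distance between two colorings. -/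
noncomputable def colDist {V : Type*} {r : ℕ} (φ ψ : V → Fin r) : ℕ :=
  {v | φ v ≠ ψ v}.ncard

/-- With the constant coloring of all vertices by color k+1 (out of k+1 colors), a proper
(k+1)-coloring at distance ≤ k exists iff G has a vertex cover of size at most k. -/
theorem fix_iff_vertexCover {V : Type*} [Fintype V] (G : SimpleGraph V)
    (hniso : ∀ v : V, ∃ u, G.Adj v u) (k : ℕ) (hk : k ≤ Fintype.card V) :
    (∃ φ' : V → Fin (k + 1), IsProperColoring G φ' ∧
        colDist (fun _ => Fin.last k) φ' ≤ k)
      ↔ ∃ S : Finset V, S.card ≤ k ∧ ∀ ⦃u v : V⦄, G.Adj u v → u ∈ S ∨ v ∈ S := by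
  classical
  constructor
  · rintro ⟨φ', hprop, hdist⟩
    refine ⟨{v | φ' v ≠ Fin.last k}.toFinset, ?_, ?_⟩
    · have : ({v | φ' v ≠ Fin.last k}.toFinset.card : ℕ)
          = {v | (fun _ => Fin.last k) v ≠ φ' v}.ncard := by
        rw [Set.ncard_eq_toFinset_card']
        congr 1
        ext v
        simp [ne_comm]
      rw [this]
      exact hdist
    · intro u v huv
      by_contra hcon
      push_neg at hcon
      obtain ⟨h1, h2⟩ := hcon
      simp only [Set.mem_toFinset, Set.mem_setOf_eq, not_not] at h1 h2
      exact hprop huv (h1.trans h2.symm)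
  · rintro ⟨S, hScard, hScov⟩
    have hcard : Fintype.card {x // x ∈ S} ≤ Fintype.card (Fin k) := by
      simpa using hScard
    obtain ⟨f⟩ := Function.Embedding.nonempty_of_card_le hcard
    set φ' : V → Fin (k + 1) := fun v =>
      if h : v ∈ S then (f ⟨v, h⟩).castSucc else Fin.last k with hφ'
    refine ⟨φ', ?_, ?_⟩
    · intro u v huv
      by_cases hu : u ∈ S <;> by_cases hv : v ∈ S
      · simp only [hφ', dif_pos hu, dif_pos hv]
        intro h
        have := f.injective (Fin.castSucc_injective _ h)
        exact huv.ne (by simpa using congrArg Subtype.val this)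
      · simp only [hφ', dif_pos hu, dif_neg hv]
        exact (Fin.castSucc_lt_last _).ne
      · simp only [hφ', dif_neg hu, dif_pos hv]
        exact fun h => (Fin.castSucc_lt_last _).ne h.symm
      · exact absurd (hScov huv) (by simp [hu, hv])
    · have hsub : {v | (fun _ => Fin.last k) v ≠ φ' v} ⊆ (S : Set V) := by
        intro v hv
        simp only [Set.mem_setOf_eq] at hv
        by_contra hvS
        apply hv
        have hvS' : v ∉ S := by simpa using hvS
        simp only [hφ', dif_neg hvS']
      calc colDist (fun _ => Fin.last k) φ'
          ≤ (S : Set V).ncard := Set.ncard_le_ncard hsub (S : Set V).toFinite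
        _ = S.card := by simp
        _ ≤ k := hScard
end

section
/- For every graph G with chromatic number χ(G), the fixing number of G equals its χ(G)-fixing number: Fix(G) = Fix(χ(G), G). -/
/-- `fixCost G φ` : minimum number of recolorings turning `φ` into a proper `r`-coloring
(`⊤` if `G` has no proper `r`-coloring). -/
noncomputable def fixCost {V : Type*} (G : SimpleGraph V) {r : ℕ} (φ : V → Fin r) : ℕ∞ :=
  sInf {d : ℕ∞ | ∃ ψ : V → Fin r, IsProperColoring G ψ ∧ (colDist φ ψ : ℕ∞) = d}

/-- The `r`-fixing number of `G`. -/
noncomputable def fixNum {V : Type*} (G : SimpleGraph V) (r : ℕ) : ℕ∞ :=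
  ⨆ φ : V → Fin r, fixCost G φ

/-- The fixing number of `G` : sup of the `r`-fixing numbers over `r ≥ χ(G)`. -/
noncomputable def fixingNumber {V : Type*} (G : SimpleGraph V) : ℕ∞ :=
  ⨆ (r : ℕ) (_ : G.chromaticNumber ≤ (r : ℕ∞)), fixNum G r

theorem Function.Surjective.exists_comp_eq_and_ne_subset {V α β : Type*} {f : α → β}
    (hf : Function.Surjective f) (φ : V → α) (ψ' : V → β) :
    ∃ ψ : V → α, f ∘ ψ = ψ' ∧ {v | φ v ≠ ψ v} ⊆ {v | f (φ v) ≠ ψ' v} := by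
  classical
  refine ⟨fun v => if f (φ v) = ψ' v then φ v else Function.surjInv hf (ψ' v), ?_, ?_⟩
  · funext v
    by_cases h : f (φ v) = ψ' v <;> simp [h, Function.surjInv_eq hf]
  · intro v hv h
    exact hv (by simp [h])

section

variable {V : Type*} {G : SimpleGraph V} {r s : ℕ}

theorem IsProperColoring.of_comp {ψ : V → Fin s} {f : Fin s → Fin r}
    (h : IsProperColoring G (f ∘ ψ)) : IsProperColoring G ψ :=
  fun _ _ hadj heq => h hadj (congrArg f heq)

theorem fixCost_le_colDist {φ ψ : V → Fin r} (hψ : IsProperColoring G ψ) :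
    fixCost G φ ≤ colDist φ ψ :=
  sInf_le ⟨ψ, hψ, rfl⟩

theorem fixCost_eq_zero_of_isProperColoring {φ : V → Fin r} (hφ : IsProperColoring G φ) :
    fixCost G φ = 0 := by
  simpa [colDist] using fixCost_le_colDist (φ := φ) hφ

theorem fixNum_eq_zero_of_isEmpty [IsEmpty V] (G : SimpleGraph V) (r : ℕ) : fixNum G r = 0 :=
  ENat.iSup_eq_zero.mpr fun _ =>
    fixCost_eq_zero_of_isProperColoring fun u _ _ => isEmptyElim u

variable [Finite V]

theorem fixCost_le_fixCost_comp {f : Fin s → Fin r} (hf : Function.Surjective f)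
    (φ : V → Fin s) : fixCost G φ ≤ fixCost G (f ∘ φ) := by
  refine le_sInf ?_
  rintro _ ⟨ψ', hψ', rfl⟩
  obtain ⟨ψ, hcomp, hsub⟩ := hf.exists_comp_eq_and_ne_subset φ ψ'
  calc fixCost G φ ≤ colDist φ ψ := fixCost_le_colDist (IsProperColoring.of_comp (hcomp ▸ hψ'))
    _ ≤ colDist (f ∘ φ) ψ' := by exact_mod_cast Set.ncard_le_ncard hsub

theorem fixNum_le_fixNum_of_surjective {f : Fin s → Fin r} (hf : Function.Surjective f) :
    fixNum G s ≤ fixNum G r :=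
  iSup_le fun φ => (fixCost_le_fixCost_comp hf φ).trans (le_iSup (fixCost G) (f ∘ φ))

theorem fixNum_le_fixNum_of_le (hr : r ≠ 0) (hrs : r ≤ s) : fixNum G s ≤ fixNum G r :=
  have : Nonempty (Fin r) := ⟨⟨0, Nat.pos_of_ne_zero hr⟩⟩
  fixNum_le_fixNum_of_surjective (Function.invFun_surjective (Fin.castLE_injective hrs))

end

/-- The fixing number of G equals its χ(G)-fixing number. -/
theorem fixingNumber_eq_fixNum_chromatic {V : Type*} [Fintype V] (G : SimpleGraph V)
    (c : ℕ) (hc : G.chromaticNumber = (c : ℕ∞)) :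
    fixingNumber G = fixNum G c := by
  refine le_antisymm (iSup₂_le fun r hr => ?_) (le_iSup₂_of_le c hc.le le_rfl)
  rcases Nat.eq_zero_or_pos c with rfl | hc_pos
  · have : IsEmpty V := G.chromaticNumber_eq_zero_iff.mp (by simpa using hc)
    simp [fixNum_eq_zero_of_isEmpty]
  · exact fixNum_le_fixNum_of_le hc_pos.ne' (by exact_mod_cast hc ▸ hr)
end

section
/- For every graph G on n vertices with chromatic number χ(G), any χ(G)-coloring of G can be turned into a proper χ(G)-coloring by recoloring at most ⌊n·(χ(G)−1)/χ(G)⌋ vertices; consequently Fix(G) ≤ ⌊n·(χ(G)−1)/χ(G)⌋. -/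
lemma key_recolor {V : Type*} [Fintype V] (G : SimpleGraph V) (c r : ℕ) (hcr : c ≤ r)
    (hc : G.chromaticNumber = (c : ℕ∞)) (φ : V → Fin r) :
    ∃ ψ : V → Fin r, IsProperColoring G ψ ∧
      colDist φ ψ ≤ Fintype.card V * (c - 1) / c := by
  obtain ⟨C⟩ := (SimpleGraph.chromaticNumber_le_iff_colorable).mp hc.le
  rcases Nat.eq_zero_or_pos c with hc0 | hc0
  · subst hc0
    exact ⟨φ, fun u v hadj => (C u).elim0, by simp [colDist]⟩
  haveI : NeZero c := ⟨hc0.ne'⟩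
  set n := Fintype.card V with hn
  -- the "hash" map Fin r → Fin c
  set h : Fin r → Fin c := fun t => ⟨t.val % c, Nat.mod_lt _ hc0⟩ with hh
  have hcast : ∀ x : Fin c, h (Fin.castLE hcr x) = x := by
    intro x
    simp [hh, Fin.ext_iff, Nat.mod_eq_of_lt x.isLt]
  set f : V → Fin c := fun v => h (φ v) - C v with hf
  -- the candidate colorings
  set ψ : Fin c → V → Fin r := fun j v => if f v = j then φ v else Fin.castLE hcr (C v + j)
    with hψ
  have hproper : ∀ j, IsProperColoring G (ψ j) := by
    intro j u v hadj
    have hCuv : C u ≠ C v := C.valid hadj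
    simp only [hψ]
    split_ifs with h1 h2 h2
    · -- both kept
      intro hEq
      apply hCuv
      have e : h (φ u) - C u = h (φ v) - C v := h1.trans h2.symm
      rw [hEq] at e
      exact sub_right_injective e
    · -- u kept, v recolored
      intro hEq
      have hu : h (φ u) = j + C u := sub_eq_iff_eq_add.mp h1
      have : h (φ u) = C v + j := by rw [hEq, hcast]
      apply hCuv
      have : j + C u = C v + j := by rw [← hu, this]
      rw [add_comm j (C u)] at this
      exact add_right_cancel this
    · -- u recolored, v kept
      intro hEq
      have hv : h (φ v) = j + C v := sub_eq_iff_eq_add.mp h2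
      have : h (φ v) = C u + j := by rw [← hEq, hcast]
      apply hCuv
      have : C u + j = j + C v := by rw [← this, hv]
      rw [add_comm j (C v)] at this
      exact add_right_cancel this
    · -- both recolored
      intro hEq
      exact hCuv (add_right_cancel (Fin.castLE_injective hcr hEq))
  -- counting
  set B : Fin c → Finset V := fun j => Finset.univ.filter (fun v => f v = j) with hB
  have hsum : ∑ j : Fin c, (B j).card = n := by
    rw [hn, ← Finset.card_univ]
    exact (Finset.card_eq_sum_card_fiberwise (f := f) (fun x _ => Finset.mem_univ _)).symm
  have hex : ∃ j : Fin c, n ≤ c * (B j).card := by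
    by_contra hcon
    push_neg at hcon
    have h1 : ∀ j : Fin c, c * (B j).card ≤ n - 1 := fun j => Nat.le_sub_one_of_lt (hcon j)
    have h2 : c * n ≤ c * (n - 1) := by
      calc c * n = ∑ j : Fin c, c * (B j).card := by rw [← Finset.mul_sum, hsum]
        _ ≤ ∑ _j : Fin c, (n - 1) := Finset.sum_le_sum (fun j _ => h1 j)
        _ = c * (n - 1) := by simp [Finset.sum_const, mul_comm]
    have hn0 : n = 0 := by
      by_contra hne
      have := Nat.le_of_mul_le_mul_left h2 hc0
      omega
    have : (B (Fin.mk 0 hc0)).card = 0 := by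
      have : (B ⟨0, hc0⟩).card ≤ n := by
        rw [hn]; exact (Finset.card_filter_le _ _).trans (by simp [Finset.card_univ])
      omega
    exact absurd (hcon ⟨0, hc0⟩) (by omega)
  obtain ⟨j, hj⟩ := hex
  refine ⟨ψ j, hproper j, ?_⟩
  have hsubset : {v | φ v ≠ ψ j v} ⊆ ↑(Finset.univ.filter (fun v => f v ≠ j)) := by
    intro v hv
    simp only [Finset.coe_filter, Set.mem_setOf_eq, Finset.mem_univ, true_and]
    intro hfv
    exact hv (by simp [hψ, hfv])
  have hdist : colDist φ (ψ j) ≤ (Finset.univ.filter (fun v => f v ≠ j)).card := by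
    rw [colDist, ← Set.ncard_coe_finset]
    exact Set.ncard_le_ncard hsubset (Set.toFinite _)
  have hcardsplit : (B j).card + (Finset.univ.filter (fun v => f v ≠ j)).card = n := by
    rw [hn, ← Finset.card_univ, hB]
    exact Finset.card_filter_add_card_filter_not _
  -- arithmetic
  have hbn : (B j).card ≤ n := by omega
  refine hdist.trans ?_
  rw [Nat.le_div_iff_mul_le hc0]
  have e1 : (Finset.univ.filter (fun v => f v ≠ j)).card = n - (B j).card := by omega
  have e2 : (n - (B j).card) * c = n * c - (B j).card * c := Nat.sub_mul _ _ _
  have e3 : n * (c - 1) = n * c - n * 1 := (Nat.mul_sub _ _ _)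
  have e4 : (B j).card * c ≤ n * c := Nat.mul_le_mul_right c hbn
  have e5 : n ≤ c * (B j).card := hj
  rw [e1, e2, e3]
  have : c * (B j).card = (B j).card * c := mul_comm _ _
  omega

/-- Any χ(G)-coloring can be made proper by recoloring at most ⌊n(χ-1)/χ⌋ vertices,
and consequently Fix(G) ≤ ⌊n(χ(G)-1)/χ(G)⌋. -/

theorem fixingNumber_le_general {V : Type*} [Fintype V] (G : SimpleGraph V)
    (c : ℕ) (hc : G.chromaticNumber = (c : ℕ∞)) :
    (∀ φ : V → Fin c, ∃ ψ : V → Fin c, IsProperColoring G ψ ∧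
        colDist φ ψ ≤ Fintype.card V * (c - 1) / c)
    ∧ fixingNumber G ≤ ((Fintype.card V * (c - 1) / c : ℕ) : ℕ∞) := by
  constructor
  · intro φ
    exact key_recolor G c c le_rfl hc φ
  · simp only [fixingNumber, fixNum, fixCost]
    refine iSup_le fun r => iSup_le fun hr => iSup_le fun φ => ?_
    have hcr : c ≤ r := by
      rw [hc] at hr
      exact_mod_cast hr
    obtain ⟨ψ, hψ, hd⟩ := key_recolor G c r hcr hc φ
    have hmem : ((colDist φ ψ : ℕ) : ℕ∞) ∈
        {d : ℕ∞ | ∃ ψ' : V → Fin r, IsProperColoring G ψ' ∧ (colDist φ ψ' : ℕ∞) = d} :=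
      ⟨ψ, hψ, rfl⟩
    refine (sInf_le hmem).trans ?_
    exact_mod_cast hd
end

section
/- The chromatic number of the disjoint union of m ≥ 1 copies of K_r is r, and together with the lower bound from the all-1 coloring, Fix(G(m,r)) = n(r−1)/r where n = mr; i.e., the bound Fix(G) ≤ ⌊n(χ(G)−1)/χ(G)⌋ is tight. -/
section Aux

variable {m r : ℕ}

/-- proper colorings are injective on each clique -/
lemma aux_inj {n : ℕ} {G : SimpleGraph (Fin m × Fin r)}
    (hG : ∀ u v : Fin m × Fin r, G.Adj u v ↔ u.1 = v.1 ∧ u.2 ≠ v.2)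
    {ψ : Fin m × Fin r → Fin n} (hψ : IsProperColoring G ψ) (i : Fin m) :
    Function.Injective (fun j => ψ (i, j)) := by
  intro j j' h
  by_contra hne
  exact hψ ((hG (i, j) (i, j')).2 ⟨rfl, hne⟩) h

def auxEquiv (z : Fin r) : {v : Fin m × Fin r // v.2 ≠ z} ≃ Fin m × {j : Fin r // j ≠ z} where
  toFun x := (x.1.1, ⟨x.1.2, x.2⟩)
  invFun y := ⟨(y.1, y.2.1), y.2.2⟩
  left_inv x := rfl
  right_inv y := rfl

lemma aux_ncard (z : Fin r) : ({v : Fin m × Fin r | v.2 ≠ z}).ncard = m * (r - 1) := by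
  have : ({v : Fin m × Fin r | v.2 ≠ z}).ncard = Nat.card {v : Fin m × Fin r // v.2 ≠ z} :=
    (Nat.card_coe_set_eq _).symm
  rw [this, Nat.card_congr (auxEquiv z), Nat.card_eq_fintype_card, Fintype.card_prod,
    Fintype.card_fin]
  congr 1
  simp [Fintype.card_subtype_compl]

lemma aux_mul : m * (r - 1) = m * r - m := by
  rcases r with _ | k
  · simp
  · simp [Nat.mul_succ]

end Aux

/-- The disjoint union G(m,r) of m copies of K_r has chromatic number r and fixing number
exactly n(r-1)/r = m(r-1): the general upper bound is tight. -/
theorem fixingNumber_disjoint_cliques {m r : ℕ} (hm : 1 ≤ m) (hr : 1 ≤ r)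
    (G : SimpleGraph (Fin m × Fin r))
    (hG : ∀ u v : Fin m × Fin r, G.Adj u v ↔ u.1 = v.1 ∧ u.2 ≠ v.2) :
    G.chromaticNumber = (r : ℕ∞) ∧ fixingNumber G = ((m * (r - 1) : ℕ) : ℕ∞) := by
  set z : Fin r := ⟨0, hr⟩ with hz
  -- chromatic number
  have hcol : G.Colorable r := by
    exact ⟨SimpleGraph.Coloring.mk (fun v => v.2) (fun {u v} h => ((hG u v).1 h).2)⟩
  have hchrom : G.chromaticNumber = (r : ℕ∞) := by
    refine le_antisymm hcol.chromaticNumber_le ?_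
    rw [SimpleGraph.chromaticNumber_eq_biInf]
    refine le_iInf₂ fun n hn => ?_
    obtain ⟨C⟩ := hn
    have hinj : Function.Injective (fun j : Fin r => C (⟨0, hm⟩, j)) :=
      aux_inj hG (fun u v h => C.valid h) ⟨0, hm⟩
    simpa using Fintype.card_le_of_injective _ hinj
  refine ⟨hchrom, le_antisymm ?_ ?_⟩
  · -- upper bound
    refine iSup₂_le fun r' hr' => iSup_le fun φ => ?_
    rw [hchrom, Nat.cast_le] at hr'
    -- construct the fixed coloring
    set ψ : Fin m × Fin r → Fin r' := fun v =>
      Equiv.swap (Fin.castLE hr' z) (φ (v.1, z)) (Fin.castLE hr' v.2) with hψdef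
    have hproper : IsProperColoring G ψ := by
      intro u v huv h
      obtain ⟨h1, h2⟩ := (hG u v).1 huv
      rw [hψdef] at h
      simp only [h1] at h
      exact h2 (Fin.castLE_injective hr' ((Equiv.swap _ _).injective h))
    have hsub : {v | φ v ≠ ψ v} ⊆ {v : Fin m × Fin r | v.2 ≠ z} := by
      intro v hv
      by_contra hvz
      simp only [Set.mem_setOf_eq, not_not] at hvz
      apply hv
      have hveq : v = (v.1, z) := Prod.ext rfl hvz
      rw [hveq]
      simp [hψdef, Equiv.swap_apply_left]
    have hdist : colDist φ ψ ≤ m * (r - 1) := by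
      rw [colDist, ← aux_ncard z]
      exact Set.ncard_le_ncard hsub (Set.toFinite _)
    refine le_trans (sInf_le ⟨ψ, hproper, rfl⟩) ?_
    exact_mod_cast hdist
  · -- lower bound: constant coloring
    have hχle : G.chromaticNumber ≤ (r : ℕ∞) := hchrom.le
    refine le_trans ?_ (le_iSup_of_le r (le_iSup_of_le hχle (le_iSup _ (fun _ => z))))
    refine le_sInf fun d hd => ?_
    obtain ⟨ψ, hψ, rfl⟩ := hd
    rw [Nat.cast_le]
    set S : Set (Fin m × Fin r) := {v | z ≠ ψ v} with hS
    -- complement has at most m elements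
    have hcompl : (Sᶜ).ncard ≤ m := by
      have h1 : (Sᶜ).ncard = Nat.card (Sᶜ : Set (Fin m × Fin r)) :=
        (Nat.card_coe_set_eq _).symm
      rw [h1]
      have h2 : Nat.card (Sᶜ : Set (Fin m × Fin r)) ≤ Nat.card (Fin m) := by
        apply Nat.card_le_card_of_injective (fun x => x.1.1)
        intro x y hxy
        have hxy' : x.1.1 = y.1.1 := hxy
        have hx : z = ψ x.1 := not_not.1 x.2
        have hy : z = ψ y.1 := not_not.1 y.2
        have h2 : x.1.2 = y.1.2 := by
          apply aux_inj hG hψ x.1.1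
          show ψ (x.1.1, x.1.2) = ψ (x.1.1, y.1.2)
          have e1 : (x.1.1, x.1.2) = x.1 := rfl
          have e2 : ((x.1.1 : Fin m), y.1.2) = y.1 := by rw [hxy']
          rw [e1, e2, ← hx, ← hy]
        exact Subtype.ext (Prod.ext hxy' h2)
      simpa using h2
    have htotal := Set.ncard_add_ncard_compl S (Set.toFinite _) (Set.toFinite _)
    have hcard : Nat.card (Fin m × Fin r) = m * r := by simp
    rw [hcard] at htotal
    rw [colDist]
    show m * (r - 1) ≤ S.ncard
    rw [aux_mul]
    omega
end

section
/- For every connected bipartite graph G on n ≥ 2 vertices, the fixing number of G equals ⌊n/2⌋. -/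
open Finset in
private lemma aux_sum_ne {r : ℕ} (a : Fin r) :
    (∑ k : Fin r, if a = k then 0 else 1) = r - 1 := by
  have h : (∑ k : Fin r, ((if a = k then 0 else 1) + if a = k then 1 else 0)) = r := by
    have he : ∀ k : Fin r, ((if a = k then 0 else 1) + if a = k then 1 else 0) = 1 := by
      intro k; by_cases hk : a = k <;> simp [hk]
    simp [he]
  have h1 : (∑ k : Fin r, if a = k then 1 else 0) = 1 := by
    simp
  rw [Finset.sum_add_distrib, h1] at h
  omega

private lemma fin2_step (a b a' b' : Fin 2) (h : a ≠ b) (h' : a' ≠ b') :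
    (a = a') ↔ (b = b') := by
  revert h h'; revert a b a' b'; decide

private lemma walk_parity {V : Type*} {G : SimpleGraph V} {ψ c : V → Fin 2}
    (hψ : IsProperColoring G ψ) (hc : IsProperColoring G c) :
    ∀ {u v : V}, G.Walk u v → (ψ u = c u ↔ ψ v = c v) := by
  intro u v p
  induction p with
  | nil => exact Iff.rfl
  | cons h q ih => exact (fin2_step _ _ _ _ (hψ h) (hc h)).trans ih

open Finset in
/-- For a connected bipartite graph on n ≥ 2 vertices the fixing number equals ⌊n/2⌋. -/
theorem fixingNumber_connected_bipartite {V : Type*} [Fintype V] (G : SimpleGraph V)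
    (hconn : G.Connected) (hbip : G.Colorable 2) (hn : 2 ≤ Fintype.card V) :
    fixingNumber G = ((Fintype.card V / 2 : ℕ) : ℕ∞) := by
  classical
  set n := Fintype.card V with hncard
  obtain ⟨c⟩ := id hbip
  have hcprop : IsProperColoring G (c : V → Fin 2) := fun u v h => c.valid h
  -- G has an edge
  have hedge : ∃ u v : V, G.Adj u v := by
    obtain ⟨u, v, huv⟩ := Fintype.exists_pair_of_one_lt_card hn
    obtain ⟨p⟩ := hconn.preconnected u v
    cases p with
    | nil => exact absurd rfl huv
    | cons h q => exact ⟨_, _, h⟩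
  have hnontriv : ∀ r : ℕ, G.chromaticNumber ≤ (r : ℕ∞) → 2 ≤ r := by
    intro r hr
    by_contra hlt
    have hr1 : r ≤ 1 := by omega
    have hcol : G.Colorable 1 := by
      have : G.Colorable r := by
        rw [← SimpleGraph.chromaticNumber_le_iff_colorable]; exact_mod_cast hr
      exact this.mono hr1
    obtain ⟨c1⟩ := hcol
    obtain ⟨u, v, huv⟩ := hedge
    exact c1.valid huv (Subsingleton.elim _ _)
  have hVne : Nonempty V := Fintype.card_pos_iff.mp (by omega)
  apply le_antisymm
  · -- upper bound
    refine iSup_le fun r => iSup_le fun hr => iSup_le fun φ => ?_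
    have hr2 : 2 ≤ r := hnontriv r hr
    have : Nontrivial (Fin r) := Fin.nontrivial_iff_two_le.mpr hr2
    -- the cost upper bound function
    set f : Fin 2 → Fin r → ℕ := fun s k =>
      (univ.filter (fun v => c v = s ∧ φ v ≠ k)).card +
      (univ.filter (fun v => c v ≠ s ∧ φ v = k)).card with hf
    have hsum : (∑ s : Fin 2, ∑ k : Fin r, f s k) = r * n := by
      have key : ∀ s k, f s k = ∑ v : V,
          ((if c v = s ∧ φ v ≠ k then 1 else 0) + if c v ≠ s ∧ φ v = k then 1 else 0) := by
        intro s k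
        rw [hf]
        simp only [Finset.sum_add_distrib]
        rw [Finset.card_filter, Finset.card_filter]
      calc (∑ s : Fin 2, ∑ k : Fin r, f s k)
          = ∑ s : Fin 2, ∑ k : Fin r, ∑ v : V,
            ((if c v = s ∧ φ v ≠ k then 1 else 0) + if c v ≠ s ∧ φ v = k then 1 else 0) := by
            refine Finset.sum_congr rfl fun s _ => Finset.sum_congr rfl fun k _ => key s k
        _ = ∑ v : V, ∑ s : Fin 2, ∑ k : Fin r,
            ((if c v = s ∧ φ v ≠ k then 1 else 0) + if c v ≠ s ∧ φ v = k then 1 else 0) := by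
            exact (Finset.sum_congr rfl fun s _ => Finset.sum_comm).trans Finset.sum_comm
        _ = ∑ v : V, r := by
            refine Finset.sum_congr rfl fun v _ => ?_
            have h2 : ∀ x : Fin 2, x = 0 ∨ x = 1 := by decide
            have hone : (∑ k : Fin r, if φ v = k then 1 else 0) = 1 := by simp
            have hne : (∑ k : Fin r, if φ v = k then 0 else 1) = r - 1 := aux_sum_ne (φ v)
            rw [Fin.sum_univ_two]
            rcases h2 (c v) with hcv | hcv
            · have t1 : (∑ k : Fin r, ((if c v = 0 ∧ φ v ≠ k then 1 else 0) +
                  if c v ≠ 0 ∧ φ v = k then 1 else 0)) =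
                  ∑ k : Fin r, (if φ v = k then 0 else 1) := by
                refine Finset.sum_congr rfl fun k _ => ?_
                by_cases h : φ v = k <;> simp [hcv, h]
              have t2 : (∑ k : Fin r, ((if c v = 1 ∧ φ v ≠ k then 1 else 0) +
                  if c v ≠ 1 ∧ φ v = k then 1 else 0)) =
                  ∑ k : Fin r, (if φ v = k then 1 else 0) := by
                refine Finset.sum_congr rfl fun k _ => ?_
                by_cases h : φ v = k <;> simp [hcv, h]
              rw [t1, t2, hne, hone]
              omega
            · have t1 : (∑ k : Fin r, ((if c v = 0 ∧ φ v ≠ k then 1 else 0) +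
                  if c v ≠ 0 ∧ φ v = k then 1 else 0)) =
                  ∑ k : Fin r, (if φ v = k then 1 else 0) := by
                refine Finset.sum_congr rfl fun k _ => ?_
                by_cases h : φ v = k <;> simp [hcv, h]
              have t2 : (∑ k : Fin r, ((if c v = 1 ∧ φ v ≠ k then 1 else 0) +
                  if c v ≠ 1 ∧ φ v = k then 1 else 0)) =
                  ∑ k : Fin r, (if φ v = k then 0 else 1) := by
                refine Finset.sum_congr rfl fun k _ => ?_
                by_cases h : φ v = k <;> simp [hcv, h]
              rw [t1, t2, hne, hone]
              omega
        _ = n * r := by rw [Finset.sum_const, Finset.card_univ, smul_eq_mul]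
        _ = r * n := Nat.mul_comm n r
    have hex : ∃ s : Fin 2, ∃ k : Fin r, f s k ≤ n / 2 := by
      by_contra hno
      push_neg at hno
      have hbig : (∑ s : Fin 2, ∑ k : Fin r, f s k) ≥ ∑ s : Fin 2, ∑ k : Fin r, (n / 2 + 1) := by
        refine Finset.sum_le_sum fun s _ => Finset.sum_le_sum fun k _ => hno s k
      rw [hsum] at hbig
      simp only [Finset.sum_const, Finset.card_univ, Fintype.card_fin, smul_eq_mul] at hbig
      -- 2 * (r * (n/2+1)) ≤ r * n
      have h1 : r * (n + 1) ≤ r * n := by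
        calc r * (n + 1) ≤ r * (2 * (n / 2 + 1)) := Nat.mul_le_mul_left r (by omega)
          _ = 2 * (r * (n / 2 + 1)) := by ring
          _ ≤ r * n := hbig
      have h3 : r * (n + 1) = r * n + r := by ring
      omega
    obtain ⟨s, k, hsk⟩ := hex
    obtain ⟨k', hk'⟩ := exists_ne k
    set ψ : V → Fin r := fun v => if c v = s then k else (if φ v = k then k' else φ v) with hψdef
    have hψprop : IsProperColoring G ψ := by
      intro u v huv
      have hcuv : c u ≠ c v := c.valid huv
      by_cases hu : c u = s
      · have hv : ¬ (c v = s) := fun h => hcuv (hu.trans h.symm)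
        simp only [hψdef, hu, if_pos rfl, hv, if_neg hv]
        by_cases hφ : φ v = k
        · simp [hφ, hk'.symm]
        · simp [hφ]
          exact fun h => hφ h.symm
      · by_cases hv : c v = s
        · simp only [hψdef, hu, if_neg hu, hv, if_pos rfl]
          by_cases hφ : φ u = k
          · simp [hφ, hk']
          · simp [hφ, hφ]
        · exact absurd ((by decide : ∀ a b x : Fin 2, a ≠ b → a ≠ x → b = x) _ _ _ hcuv hu) hv
    -- distance bound
    have hdist : colDist φ ψ ≤ n / 2 := by
      have hsubset : (univ.filter (fun v => φ v ≠ ψ v)) ⊆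
          (univ.filter (fun v => c v = s ∧ φ v ≠ k)) ∪
          (univ.filter (fun v => c v ≠ s ∧ φ v = k)) := by
        intro v hv
        simp only [Finset.mem_filter, Finset.mem_univ, true_and] at hv
        simp only [Finset.mem_union, Finset.mem_filter, Finset.mem_univ, true_and]
        by_cases hcv : c v = s
        · left
          refine ⟨hcv, fun h => hv ?_⟩
          simp [hψdef, hcv, h]
        · right
          refine ⟨hcv, ?_⟩
          by_cases hφ : φ v = k
          · exact hφ
          · exact absurd (by simp [hψdef, hcv, hφ]) hv
      have hcd : colDist φ ψ = (univ.filter (fun v => φ v ≠ ψ v)).card := by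
        rw [colDist, Set.ncard_eq_toFinset_card']
        congr 1
        ext v
        simp
      rw [hcd]
      calc (univ.filter (fun v => φ v ≠ ψ v)).card
          ≤ ((univ.filter (fun v => c v = s ∧ φ v ≠ k)) ∪
            (univ.filter (fun v => c v ≠ s ∧ φ v = k))).card := Finset.card_le_card hsubset
        _ ≤ f s k := Finset.card_union_le _ _
        _ ≤ n / 2 := hsk
    calc fixCost G φ ≤ (colDist φ ψ : ℕ∞) := sInf_le ⟨ψ, hψprop, rfl⟩
      _ ≤ ((n / 2 : ℕ) : ℕ∞) := by exact_mod_cast hdist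
  · -- lower bound
    obtain ⟨S, _, hScard⟩ := Finset.exists_subset_card_eq
      (show n / 2 ≤ (univ : Finset V).card by rw [Finset.card_univ]; omega)
    set φ : V → Fin 2 := fun v => if v ∈ S then c v + 1 else c v with hφdef
    have hlow : ((n / 2 : ℕ) : ℕ∞) ≤ fixCost G φ := by
      refine le_sInf fun d hd => ?_
      obtain ⟨ψ, hψprop, rfl⟩ := hd
      rw [Nat.cast_le]
      obtain ⟨v₀⟩ := hVne
      by_cases h0 : ψ v₀ = c v₀
      · have hall : ∀ v, ψ v = c v := fun v =>
          (walk_parity hψprop hcprop (hconn.preconnected v v₀).some).mpr h0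
        have hset : {v | φ v ≠ ψ v} = ↑S := by
          ext v
          simp only [Set.mem_setOf_eq, hall v, Finset.coe_mem, Finset.mem_coe]
          by_cases hv : v ∈ S
          · simp [hφdef, hv, (by decide : ∀ x : Fin 2, x + 1 ≠ x) (c v)]
          · simp [hφdef, hv]
        rw [colDist, hset, Set.ncard_coe_finset, hScard]
      · have hall : ∀ v, ψ v ≠ c v := fun v h =>
          h0 ((walk_parity hψprop hcprop (hconn.preconnected v₀ v).some).mpr h)
        have hall' : ∀ v, ψ v = c v + 1 := fun v =>
          (by decide : ∀ a b : Fin 2, a ≠ b → a = b + 1) _ _ (hall v)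
        have hset : {v | φ v ≠ ψ v} = ↑(Sᶜ) := by
          ext v
          simp only [Set.mem_setOf_eq, hall' v, Finset.coe_compl, Set.mem_compl_iff,
            Finset.mem_coe]
          by_cases hv : v ∈ S
          · simp [hφdef, hv]
          · have hφv : φ v = c v := by simp [hφdef, hv]
            rw [hφv]
            simp only [hv, not_false_iff, iff_true]
            exact fun h => (by decide : ∀ x : Fin 2, x + 1 ≠ x) (c v) h.symm
        rw [colDist, hset, Set.ncard_coe_finset, Finset.card_compl, hScard]
        omega
    have hχ : G.chromaticNumber ≤ ((2 : ℕ) : ℕ∞) := by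
      exact_mod_cast hbip.chromaticNumber_le
    calc ((n / 2 : ℕ) : ℕ∞) ≤ fixCost G φ := hlow
      _ ≤ fixNum G 2 := le_iSup _ φ
      _ ≤ fixingNumber G := le_iSup₂_of_le 2 hχ le_rfl
end

section
/- Let n ≥ 9 be odd and C_n the cycle on n vertices. For every r ≥ 3 and every r-coloring φ of C_n, there is a proper r-coloring of C_n differing from φ on at most 1 + ⌊(n−1)/2⌋ vertices. -/
open Function

section Colorings

variable {r : ℕ}

noncomputable def thirdColor (hr : 2 < r) (a b : Fin r) : Fin r :=
  (Fin.exists_ne_and_ne_of_two_lt a b hr).choose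

lemma thirdColor_ne_left (hr : 2 < r) (a b : Fin r) : thirdColor hr a b ≠ a :=
  (Fin.exists_ne_and_ne_of_two_lt a b hr).choose_spec.1

lemma thirdColor_ne_right (hr : 2 < r) (a b : Fin r) : thirdColor hr a b ≠ b :=
  (Fin.exists_ne_and_ne_of_two_lt a b hr).choose_spec.2

lemma colDist_update_le {V : Type*} [Finite V] [DecidableEq V] (φ ψ : V → Fin r) (v : V)
    (c : Fin r) : colDist φ (update ψ v c) ≤ colDist φ ψ + 1 := by
  have hsub : {w | φ w ≠ update ψ v c w} ⊆ insert v {w | φ w ≠ ψ w} := by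
    intro w hw
    by_cases hwv : w = v
    · exact Or.inl hwv
    · exact Or.inr (by simpa [update_of_ne hwv] using hw)
  exact (Set.ncard_le_ncard hsub).trans (Set.ncard_insert_le _ _)

lemma isProperColoring_of_forall_ne_add_one {A : Type*} [AddCommGroupWithOne A]
    {C : SimpleGraph A} (hC : ∀ u v, C.Adj u v → u - v = 1 ∨ v - u = 1) {ψ : A → Fin r}
    (hψ : ∀ u, ψ u ≠ ψ (u + 1)) : IsProperColoring C ψ := by
  intro u v huv
  rcases hC u v huv with h | h
  · rw [sub_eq_iff_eq_add'.1 h]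
    exact (hψ v).symm
  · rw [sub_eq_iff_eq_add'.1 h]
    exact hψ u

end Colorings

lemma update_ne_update_add_one {A β : Type*} [AddGroupWithOne A] [DecidableEq A]
    (hA : (1 : A) ≠ 0) {f : A → β} {t : A} {c : β}
    (hf : ∀ u, u ≠ t - 1 → u ≠ t → f u ≠ f (u + 1)) (hc₁ : c ≠ f (t - 1))
    (hc₂ : c ≠ f (t + 1)) (u : A) :
    update f t c u ≠ update f t c (u + 1) := by
  by_cases hut : u = t
  · subst hut
    rwa [update_self, update_of_ne (by simpa using hA)]
  by_cases hu : u = t - 1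
  · subst hu
    rw [sub_add_cancel, update_self, update_of_ne hut]
    exact hc₁.symm
  · rw [update_of_ne hut, update_of_ne (fun h => hu (eq_sub_of_add_eq h))]
    exact hf u hu hut

lemma ZMod.val_add_one_of_ne_neg_one {n : ℕ} [NeZero n] {u : ZMod n} (hu : u ≠ -1) :
    (u + 1).val = u.val + 1 := by
  obtain ⟨k, rfl⟩ := Nat.exists_eq_add_one_of_ne_zero (NeZero.ne n)
  have hlt : u.val < k := by
    have hne : u.val ≠ k := fun h => hu (ZMod.val_injective _ (by rw [h, ZMod.val_neg_one]))
    have := ZMod.val_lt u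
    omega
  have hone : (1 : ZMod (k + 1)).val = 1 := ZMod.val_one'' (by omega)
  rw [ZMod.val_add_of_lt (by omega), hone]

section RecolorOdd

variable {n r : ℕ} (hr : 2 < r) (φ : ZMod n → Fin r)

noncomputable def recolorOdd : ZMod n → Fin r := fun v =>
  if Odd v.val then thirdColor hr (φ (v - 1)) (φ (v + 1)) else φ v

lemma recolorOdd_ne_add_one {u : ZMod n} (hu : (u + 1).val = u.val + 1) :
    recolorOdd hr φ u ≠ recolorOdd hr φ (u + 1) := by
  by_cases ho : Odd u.val
  · have he : ¬ Odd (u + 1).val := by rwa [hu, Nat.odd_add_one, not_not]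
    simp only [recolorOdd, if_pos ho, if_neg he]
    exact thirdColor_ne_right hr _ _
  · have ho' : Odd (u + 1).val := by rwa [hu, Nat.odd_add_one]
    simp only [recolorOdd, if_neg ho, if_pos ho', add_sub_cancel_right]
    exact (thirdColor_ne_left hr _ _).symm

lemma colDist_recolorOdd_le [NeZero n] : colDist φ (recolorOdd hr φ) ≤ n / 2 := by
  have hodd : ∀ m : ℕ, 2 ∣ m + 1 ↔ Odd m := fun m => by
    rw [← even_iff_two_dvd, Nat.even_add_one, Nat.not_even_iff_odd]
  calc colDist φ (recolorOdd hr φ)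
      ≤ (↑({m ∈ Finset.range n | 2 ∣ m + 1}) : Set ℕ).ncard := by
        refine Set.ncard_le_ncard_of_injOn ZMod.val ?_ (ZMod.val_injective n).injOn
        intro v hv
        by_contra hv'
        simp only [Finset.coe_filter, Finset.mem_range, Set.mem_ofPred_eq, hodd, ZMod.val_lt,
          true_and] at hv'
        exact hv (by simp only [recolorOdd, if_neg hv'])
    _ = n / 2 := by rw [Set.ncard_coe_finset, Nat.card_multiples]

end RecolorOdd

theorem odd_cycle_fix_general {n : ℕ} (hodd : Odd n)
    (C : SimpleGraph (ZMod n))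
    (hC : ∀ u v : ZMod n, C.Adj u v ↔ u - v = 1 ∨ v - u = 1)
    (r : ℕ) (hr : 3 ≤ r) (φ : ZMod n → Fin r) :
    ∃ ψ : ZMod n → Fin r, IsProperColoring C ψ ∧ colDist φ ψ ≤ 1 + (n - 1) / 2 := by
  have : NeZero n := ⟨hodd.pos.ne'⟩
  have hone : (1 : ZMod n) ≠ 0 := fun h => C.irrefl ((hC 0 0).2 (Or.inl (by rw [sub_self, h])))
  set ψ₀ := recolorOdd hr φ
  refine ⟨update ψ₀ (-1) (thirdColor hr (ψ₀ (-1 - 1)) (ψ₀ (-1 + 1))), ?_, ?_⟩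
  · refine isProperColoring_of_forall_ne_add_one (fun u v => (hC u v).1) ?_
    exact update_ne_update_add_one hone
      (fun u _ hu => recolorOdd_ne_add_one hr φ (ZMod.val_add_one_of_ne_neg_one hu))
      (thirdColor_ne_left hr _ _) (thirdColor_ne_right hr _ _)
  · calc colDist φ (update ψ₀ (-1) _)
        ≤ colDist φ ψ₀ + 1 := colDist_update_le _ _ _ _
      _ ≤ n / 2 + 1 := by gcongr; exact colDist_recolorOdd_le hr φ
      _ = 1 + (n - 1) / 2 := by obtain ⟨k, rfl⟩ := hodd; omega

/-- For an odd cycle on n ≥ 9 vertices, every r-coloring (r ≥ 3) can be made proper by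
recoloring at most 1 + ⌊(n-1)/2⌋ vertices. -/
theorem odd_cycle_fix {n : ℕ} (hn : 9 ≤ n) (hodd : Odd n)
    (C : SimpleGraph (ZMod n))
    (hC : ∀ u v : ZMod n, C.Adj u v ↔ u - v = 1 ∨ v - u = 1)
    (r : ℕ) (hr : 3 ≤ r) (φ : ZMod n → Fin r) :
    ∃ ψ : ZMod n → Fin r, IsProperColoring C ψ ∧ colDist φ ψ ≤ 1 + (n - 1) / 2 :=
  odd_cycle_fix_general hodd C hC r hr φ
end
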